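/- arXiv:1912.08181 — 3 statements merged into one kernel-verified Lean document; each statement's English description precedes it below -/
import Mathlib

section
/- Let F be a field, d ≥ 0, A a finite subset of F^d, s a nonnegative integer, and p a polynomial in 2d variables over F of total degree at most 2s+1. Let M be the A × A matrix whose (a,b) entry is p(a,b) (the evaluation of p at the concatenated vector (a,b)). Then rank(M) ≤ 2·dim_s(A), where dim_s(A) is the dimension of the space of functions A → F that are restrictions to A of polynomials in d variables of total degree at most s. -/
/-!
Write `p(x, y)` with `x, y` the two blocks of `d` variables. Since `deg p ≤ 2s+1`, every monomial
has `x`-degree at most `s` or `y`-degree at most `s`, so `p = p₁ + p₂` where every column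
`a ↦ p₁(a, b)` and every row `b ↦ p₂(a, b)` is the restriction of a polynomial of degree at most
`s`. Each of the two evaluation matrices therefore has rank at most `dim_s(A)`, and rank is
subadditive.
-/

open MvPolynomial Matrix

/-- `dim_s(A)`: the dimension of the space of functions `A → F` that are restrictions to `A`
of `d`-variate polynomials of total degree at most `s`. -/
noncomputable def polyDim (F : Type*) [Field F] (d s : ℕ) (A : Finset (Fin d → F)) : ℕ :=
  Module.finrank F (Submodule.span F
    {f : A → F | ∃ q : MvPolynomial (Fin d) F, q.totalDegree ≤ s ∧
      ∀ a : A, f a = eval (a : Fin d → F) q})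

namespace Matrix

variable {m n K : Type*} [Field K] [Fintype n]

theorem rank_add_le (A B : Matrix m n K) : (A + B).rank ≤ A.rank + B.rank := by
  rw [rank, mulVecLin_add]
  exact (Submodule.finrank_mono (LinearMap.range_add_le _ _)).trans
    (Submodule.finrank_add_le_finrank_add_finrank _ _)

theorem rank_le_finrank_span_of_col_mem [Fintype m] {A : Matrix m n K} {S : Set (m → K)}
    (h : ∀ j, A.col j ∈ S) : A.rank ≤ Module.finrank K (Submodule.span K S) := by
  rw [rank_eq_finrank_span_cols]
  exact Submodule.finrank_mono (Submodule.span_mono (Set.range_subset_iff.2 h))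

end Matrix

namespace MvPolynomial

variable {R σ τ : Type*}

theorem exists_add_eq_support_split [CommSemiring R] (p : MvPolynomial σ R)
    (P : (σ →₀ ℕ) → Prop) [DecidablePred P] :
    ∃ p₁ p₂ : MvPolynomial σ R, p₁ + p₂ = p ∧
      (∀ v ∈ p₁.support, v ∈ p.support ∧ P v) ∧ (∀ v ∈ p₂.support, v ∈ p.support ∧ ¬P v) := by
  classical
  have support_le (Q : (σ →₀ ℕ) → Prop) [DecidablePred Q] :
      ∀ v ∈ (∑ u ∈ p.support.filter Q, monomial u (coeff u p)).support,
        v ∈ p.support ∧ Q v := by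
    intro v hv
    obtain ⟨u, hu, hvu⟩ := Finset.mem_biUnion.1 (support_sum hv)
    rw [support_monomial_subset hvu |> Finset.mem_singleton.1]
    exact Finset.mem_filter.1 hu
  refine ⟨_, _, ?_, support_le P, support_le (¬P ·)⟩
  rw [Finset.sum_filter_add_sum_filter_not, support_sum_monomial_coeff]

theorem exists_totalDegree_le_eval_sumElim_left [CommSemiring R] [Fintype σ] [Fintype τ]
    {s : ℕ} (q : MvPolynomial (σ ⊕ τ) R) (hq : ∀ v ∈ q.support, ∑ i, v (Sum.inl i) ≤ s)
    (b : τ → R) :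
    ∃ r : MvPolynomial σ R, r.totalDegree ≤ s ∧ ∀ a, eval (Sum.elim a b) q = eval a r := by
  refine ⟨∑ v ∈ q.support, monomial (Finsupp.equivFunOnFinite.symm (fun i => v (Sum.inl i)))
      (coeff v q * ∏ j, b j ^ v (Sum.inr j)), ?_, fun a => ?_⟩
  · refine (totalDegree_finsetSum _ _).trans (Finset.sup_le fun v hv => ?_)
    refine (totalDegree_monomial_le _ _).trans ?_
    rw [Finsupp.sum_fintype _ _ fun _ => rfl]
    simpa using hq v hv
  · rw [map_sum, eval_eq' (Sum.elim a b) q]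
    refine Finset.sum_congr rfl fun v _ => ?_
    rw [eval_monomial, Finsupp.prod_fintype _ _ fun i => pow_zero (a i), Fintype.prod_sum_type]
    simp only [Sum.elim_inl, Sum.elim_inr, Finsupp.coe_equivFunOnFinite_symm]
    ring

theorem exists_totalDegree_le_eval_sumElim_right [CommSemiring R] [Fintype σ] [Fintype τ]
    {s : ℕ} (q : MvPolynomial (σ ⊕ τ) R) (hq : ∀ v ∈ q.support, ∑ j, v (Sum.inr j) ≤ s)
    (a : σ → R) :
    ∃ r : MvPolynomial τ R, r.totalDegree ≤ s ∧ ∀ b, eval (Sum.elim a b) q = eval b r := by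
  classical
  have hq_swap : ∀ v ∈ (rename Sum.swap q).support, ∑ j, v (Sum.inl j) ≤ s := by
    rw [support_rename_of_injective Sum.swap_leftInverse.injective]
    rintro _ hv
    obtain ⟨u, hu, rfl⟩ := Finset.mem_image.1 hv
    refine (Finset.sum_congr rfl fun j _ => ?_).trans_le (hq u hu)
    exact Finsupp.mapDomain_apply Sum.swap_leftInverse.injective u (Sum.inr j)
  obtain ⟨r, hr, hre⟩ := exists_totalDegree_le_eval_sumElim_left _ hq_swap a
  exact ⟨r, hr, fun b => by rw [← hre, eval_rename, Sum.elim_swap]⟩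

end MvPolynomial

section EvalMatrix

variable {F : Type*} [Field F] {d s : ℕ} {A : Finset (Fin d → F)}

theorem rank_of_eval_sumElim_le_polyDim_of_left (q : MvPolynomial (Fin d ⊕ Fin d) F)
    (hq : ∀ v ∈ q.support, ∑ i, v (Sum.inl i) ≤ s) :
    (Matrix.of fun a b : A => eval (Sum.elim (a : Fin d → F) b) q).rank ≤ polyDim F d s A := by
  refine rank_le_finrank_span_of_col_mem fun b => ?_
  obtain ⟨r, hr, hre⟩ := exists_totalDegree_le_eval_sumElim_left q hq (b : Fin d → F)
  exact ⟨r, hr, fun a => hre a⟩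

theorem rank_of_eval_sumElim_le_polyDim_of_right (q : MvPolynomial (Fin d ⊕ Fin d) F)
    (hq : ∀ v ∈ q.support, ∑ j, v (Sum.inr j) ≤ s) :
    (Matrix.of fun a b : A => eval (Sum.elim (a : Fin d → F) b) q).rank ≤ polyDim F d s A := by
  rw [← rank_transpose]
  refine rank_le_finrank_span_of_col_mem fun a => ?_
  obtain ⟨r, hr, hre⟩ := exists_totalDegree_le_eval_sumElim_right q hq (a : Fin d → F)
  exact ⟨r, hr, fun b => hre b⟩

end EvalMatrix

/-- Part 1 of the generalized Croot–Lev–Pach lemma: if `p` is a `2d`-variate polynomial of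
degree at most `2s+1`, then the `A × A` matrix with entries `p(a, b)` has rank at most
`2 · dim_s(A)`. -/
theorem rank_le_two_mul_polyDim (F : Type*) [Field F] (d s : ℕ) (A : Finset (Fin d → F))
    (p : MvPolynomial (Fin d ⊕ Fin d) F) (hp : p.totalDegree ≤ 2 * s + 1)
    (M : Matrix A A F)
    (hM : ∀ a b : A, M a b = eval (Sum.elim (a : Fin d → F) (b : Fin d → F)) p) :
    M.rank ≤ 2 * polyDim F d s A := by
  obtain ⟨p₁, p₂, rfl, h₁, h₂⟩ :=
    p.exists_add_eq_support_split fun v => ∑ i, v (Sum.inl i) ≤ s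
  have hM_add : M = Matrix.of (fun a b : A => eval (Sum.elim (a : Fin d → F) b) p₁) +
      Matrix.of (fun a b : A => eval (Sum.elim (a : Fin d → F) b) p₂) := by
    ext a b
    simp [hM]
  have h₂_right : ∀ v ∈ p₂.support, ∑ j, v (Sum.inr j) ≤ s := by
    intro v hv
    obtain ⟨hvp, hv_inl⟩ := h₂ v hv
    have hv_deg := (le_totalDegree hvp).trans hp
    rw [Finsupp.sum_fintype _ _ fun _ => rfl, Fintype.sum_sum_type] at hv_deg
    omega
  calc M.rank ≤ _ := hM_add ▸ rank_add_le _ _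
    _ ≤ polyDim F d s A + polyDim F d s A :=
      add_le_add (rank_of_eval_sumElim_le_polyDim_of_left p₁ fun v hv => (h₁ v hv).2)
        (rank_of_eval_sumElim_le_polyDim_of_right p₂ h₂_right)
    _ = 2 * polyDim F d s A := (two_mul _).symm
end

section
/- Let F be a field, d ≥ 0, A a finite subset of F^d, s a nonnegative integer, and p a polynomial in 2d variables over F of total degree at most 2s+1. Let Ω be the subspace of functions f : A → F satisfying Σ_{a ∈ A} f(a) q(a) = 0 for every polynomial q in d variables of total degree at most s. Then for all f, g ∈ Ω, the bilinear expression Σ_{a,b ∈ A} p(a,b) f(a) g(b) equals 0. -/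
open MvPolynomial

/-- If `f, g : A → F` are orthogonal (over `A`) to all polynomials of total degree at most `s`
(i.e. they lie in the subspace `Ω`), and `p` is a `2d`-variate polynomial of total degree at
most `2s+1`, then `∑_{a,b ∈ A} p(a,b) f(a) g(b) = 0`. -/
theorem bilinear_eval_eq_zero_of_mem_Omega (F : Type*) [Field F] (d s : ℕ)
    (A : Finset (Fin d → F))
    (p : MvPolynomial (Fin d ⊕ Fin d) F) (hp : p.totalDegree ≤ 2 * s + 1)
    (f g : A → F)
    (hf : ∀ q : MvPolynomial (Fin d) F, q.totalDegree ≤ s →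
      ∑ a : A, f a * eval (a : Fin d → F) q = 0)
    (hg : ∀ q : MvPolynomial (Fin d) F, q.totalDegree ≤ s →
      ∑ a : A, g a * eval (a : Fin d → F) q = 0) :
    ∑ a : A, ∑ b : A, eval (Sum.elim (a : Fin d → F) (b : Fin d → F)) p * f a * g b = 0 := by
  have key : ∀ m ∈ p.support,
      ∑ a : A, ∑ b : A,
        eval (Sum.elim (a : Fin d → F) (b : Fin d → F)) (monomial m (coeff m p)) * f a * g b = 0 := by
    intro m hm
    set mL : Fin d →₀ ℕ := m.comapDomain Sum.inl Sum.inl_injective.injOn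
    set mR : Fin d →₀ ℕ := m.comapDomain Sum.inr Sum.inr_injective.injOn
    have heval : ∀ a b : Fin d → F,
        eval (Sum.elim a b) (monomial m (coeff m p))
          = coeff m p * eval a (monomial mL 1) * eval b (monomial mR 1) := by
      intro a b
      simp only [eval_monomial, one_mul]
      rw [Finsupp.prod_fintype _ _ (fun i => pow_zero _),
        Finsupp.prod_fintype _ _ (fun i => pow_zero _),
        Finsupp.prod_fintype _ _ (fun i => pow_zero _),
        Fintype.prod_sum_type]
      simp [mL, mR, Finsupp.comapDomain_apply, mul_assoc]
    have hsumL : (mL.sum fun _ n => n) = ∑ i, m (Sum.inl i) := by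
      rw [Finsupp.sum_fintype _ _ (fun i => rfl)]
      simp [mL, Finsupp.comapDomain_apply]
    have hsumR : (mR.sum fun _ n => n) = ∑ i, m (Sum.inr i) := by
      rw [Finsupp.sum_fintype _ _ (fun i => rfl)]
      simp [mR, Finsupp.comapDomain_apply]
    have hdeg : (mL.sum fun _ n => n) + (mR.sum fun _ n => n) ≤ 2 * s + 1 := by
      rw [hsumL, hsumR]
      have : (m.sum fun _ n => n) ≤ 2 * s + 1 :=
        le_trans (MvPolynomial.le_totalDegree hm) hp
      rwa [Finsupp.sum_fintype _ _ (fun i => rfl), Fintype.sum_sum_type] at this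
    have hcase : (mL.sum fun _ n => n) ≤ s ∨ (mR.sum fun _ n => n) ≤ s := by omega
    simp only [heval]
    rcases hcase with h | h
    · have hz := hf (monomial mL 1) (by
        rw [totalDegree_monomial _ one_ne_zero]; exact h)
      calc ∑ a : A, ∑ b : A, coeff m p * eval (a:Fin d → F) (monomial mL 1) * eval (b:Fin d → F) (monomial mR 1) * f a * g b
          = ∑ a : A, (∑ b : A, coeff m p * g b * eval (b:Fin d → F) (monomial mR 1)) * (f a * eval (a:Fin d → F) (monomial mL 1)) := by
            apply Finset.sum_congr rfl; intro a _
            rw [Finset.sum_mul]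
            apply Finset.sum_congr rfl; intro b _; ring
        _ = 0 := by rw [← Finset.mul_sum, hz, mul_zero]
    · have hz := hg (monomial mR 1) (by
        rw [totalDegree_monomial _ one_ne_zero]; exact h)
      calc ∑ a : A, ∑ b : A, coeff m p * eval (a:Fin d → F) (monomial mL 1) * eval (b:Fin d → F) (monomial mR 1) * f a * g b
          = ∑ a : A, ∑ b : A, (coeff m p * f a * eval (a:Fin d → F) (monomial mL 1)) * (g b * eval (b:Fin d → F) (monomial mR 1)) := by
            apply Finset.sum_congr rfl; intro a _
            apply Finset.sum_congr rfl; intro b _; ring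
        _ = 0 := by
            apply Finset.sum_eq_zero; intro a _
            rw [← Finset.mul_sum, hz, mul_zero]
  conv_lhs => rw [← p.support_sum_monomial_coeff]
  have expand : ∀ a b : A, eval (Sum.elim (a:Fin d → F) (b:Fin d → F)) (∑ m ∈ p.support, monomial m (coeff m p)) * f a * g b
      = ∑ m ∈ p.support, eval (Sum.elim (a:Fin d → F) (b:Fin d → F)) (monomial m (coeff m p)) * f a * g b := by
    intro a b; rw [map_sum, Finset.sum_mul, Finset.sum_mul]
  simp_rw [expand]
  have e1 : ∀ a : A, (∑ b : A, ∑ m ∈ p.support,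
      eval (Sum.elim (a:Fin d → F) (b:Fin d → F)) (monomial m (coeff m p)) * f a * g b)
      = ∑ m ∈ p.support, ∑ b : A,
      eval (Sum.elim (a:Fin d → F) (b:Fin d → F)) (monomial m (coeff m p)) * f a * g b :=
    fun a => Finset.sum_comm
  simp_rw [e1]
  rw [Finset.sum_comm]
  exact Finset.sum_eq_zero key
end

section
/- Let F be a field, d ≥ 0, A a finite subset of F^d, and s a nonnegative integer. Let α and β be multi-indices (exponent vectors in ℕ^d) with |α| + |β| ≤ 2s+1, and let f, g : A → F be functions such that Σ_{a ∈ A} f(a) q(a) = 0 and Σ_{a ∈ A} g(a) q(a) = 0 for every polynomial q in d variables of total degree at most s. Then Σ_{a,b ∈ A} a^α b^β f(a) g(b) = 0, where a^α denotes the monomial product Π_i a_i^{α_i}. -/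
open MvPolynomial

/-- If `α, β` are multi-indices with `|α| + |β| ≤ 2s+1`, and `f, g : A → F` are orthogonal
(over `A`) to all `d`-variate polynomials of total degree at most `s`, then
`∑_{a,b ∈ A} a^α b^β f(a) g(b) = 0`. -/
theorem monomial_bilinear_sum_eq_zero (F : Type*) [Field F] (d s : ℕ)
    (A : Finset (Fin d → F)) (α β : Fin d → ℕ)
    (hαβ : (∑ i, α i) + (∑ i, β i) ≤ 2 * s + 1)
    (f g : A → F)
    (hf : ∀ q : MvPolynomial (Fin d) F, q.totalDegree ≤ s →
      ∑ a : A, f a * eval (a : Fin d → F) q = 0)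
    (hg : ∀ q : MvPolynomial (Fin d) F, q.totalDegree ≤ s →
      ∑ a : A, g a * eval (a : Fin d → F) q = 0) :
    ∑ a : A, ∑ b : A,
      (∏ i, (a : Fin d → F) i ^ α i) * (∏ i, (b : Fin d → F) i ^ β i) * f a * g b = 0 := by
  have key : ∀ γ : Fin d → ℕ, (∑ i, γ i) ≤ s → ∀ h : A → F,
      (∀ q : MvPolynomial (Fin d) F, q.totalDegree ≤ s →
        ∑ a : A, h a * eval (a : Fin d → F) q = 0) →
      ∑ a : A, h a * ∏ i, (a : Fin d → F) i ^ γ i = 0 := by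
    intro γ hγ h hh
    have hq : (∏ i, (X i : MvPolynomial (Fin d) F) ^ γ i).totalDegree ≤ s := by
      refine le_trans (MvPolynomial.totalDegree_finset_prod _ _) ?_
      refine le_trans (Finset.sum_le_sum fun i _ =>
        (MvPolynomial.totalDegree_pow _ _).trans ?_) hγ
      simp [MvPolynomial.totalDegree_X]
    have := hh _ hq
    simpa using this
  have fact : ∑ a : A, ∑ b : A,
      (∏ i, (a : Fin d → F) i ^ α i) * (∏ i, (b : Fin d → F) i ^ β i) * f a * g b
      = (∑ a : A, f a * ∏ i, (a : Fin d → F) i ^ α i) *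
        (∑ b : A, g b * ∏ i, (b : Fin d → F) i ^ β i) := by
    rw [Finset.sum_mul_sum]
    refine Finset.sum_congr rfl fun a _ => Finset.sum_congr rfl fun b _ => by ring
  rw [fact]
  rcases le_or_gt (∑ i, α i) s with h | h
  · rw [key α h f hf]; ring
  · have hβ : (∑ i, β i) ≤ s := by omega
    rw [key β hβ g hg]; ring
end
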